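/- The functions H_1, H_2, H_3 pairwise Poisson-commute with respect to the Lie–Poisson structure g^(3): {H_i, H_j} = 0 for all i,j ∈ {1,2,3}, where H_1 = 2⟨b,y⟩, H_2 = ⟨y,y⟩ + 2⟨b,x⟩, H_3 = 2(⟨b,z⟩ + ⟨y,x⟩). -/

import Mathlib

open Matrix

noncomputable section

/-- Phase space of `g^(3)`: triples `(y, x, z)` of vectors in `ℝ³`. -/
abbrev G3 := (Fin 3 → ℝ) × (Fin 3 → ℝ) × (Fin 3 → ℝ)

/-- Gradient with respect to `y`. -/
def gradY (f : G3 → ℝ) (p : G3) : Fin 3 → ℝ :=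
  fun a => fderiv ℝ f p (Pi.single a 1, 0, 0)

/-- Gradient with respect to `x`. -/
def gradX (f : G3 → ℝ) (p : G3) : Fin 3 → ℝ :=
  fun a => fderiv ℝ f p (0, Pi.single a 1, 0)

/-- Gradient with respect to `z`. -/
def gradZ (f : G3 → ℝ) (p : G3) : Fin 3 → ℝ :=
  fun a => fderiv ℝ f p (0, 0, Pi.single a 1)

/-- The Lie–Poisson bracket of `g^(3)`: the extension by the Leibniz rule of
`{y^α,y^β} = ε^{αβ}_γ y^γ`, `{y^α,x^β} = ε^{αβ}_γ x^γ`, `{y^α,z^β} = ε^{αβ}_γ z^γ`,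
`{x^α,x^β} = ε^{αβ}_γ z^γ`, `{x^α,z^β} = {z^α,z^β} = 0`, namely
`{f,g} = ⟨y, ∇_y f ∧ ∇_y g⟩ + ⟨x, ∇_y f ∧ ∇_x g + ∇_x f ∧ ∇_y g⟩
       + ⟨z, ∇_y f ∧ ∇_z g + ∇_z f ∧ ∇_y g⟩ + ⟨z, ∇_x f ∧ ∇_x g⟩`. -/
def pb3 (f g : G3 → ℝ) (p : G3) : ℝ :=
  p.1 ⬝ᵥ ((gradY f p) ⨯₃ (gradY g p))
    + p.2.1 ⬝ᵥ ((gradY f p) ⨯₃ (gradX g p) + (gradX f p) ⨯₃ (gradY g p))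
    + p.2.2 ⬝ᵥ ((gradY f p) ⨯₃ (gradZ g p) + (gradZ f p) ⨯₃ (gradY g p))
    + p.2.2 ⬝ᵥ ((gradX f p) ⨯₃ (gradX g p))

/-- The first integrals `H₁ = 2⟨b,y⟩`, `H₂ = ⟨y,y⟩ + 2⟨b,x⟩`,
`H₃ = 2(⟨b,z⟩ + ⟨y,x⟩)`. -/
def Ham (b : Fin 3 → ℝ) : Fin 3 → G3 → ℝ :=
  ![fun p => 2 * (b ⬝ᵥ p.1),
    fun p => p.1 ⬝ᵥ p.1 + 2 * (b ⬝ᵥ p.2.1),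
    fun p => 2 * (b ⬝ᵥ p.2.2 + p.1 ⬝ᵥ p.2.1)]

/-
The gradients `(∇_y, ∇_x, ∇_z)` of `H₁, H₂, H₃` are `(2b, 0, 0)`, `(2y, 2b, 0)` and
`(2x, 2y, 2b)`. The bracket is antisymmetric, so only `{H₁,H₂}`, `{H₁,H₃}`, `{H₂,H₃}` need
checking, and in each of them every term is a triple product with a repeated vector or cancels
against another by the antisymmetry of the cross product or of the triple product.
-/

section DotProduct

variable {ι E : Type*} [Fintype ι] [NormedAddCommGroup E] [NormedSpace ℝ E]

def dotProductCLM (c : ι → ℝ) : (ι → ℝ) →L[ℝ] ℝ :=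
  ∑ i, c i • ContinuousLinearMap.proj i

@[simp]
lemma dotProductCLM_apply (c v : ι → ℝ) : dotProductCLM c v = c ⬝ᵥ v := by
  simp [dotProductCLM, dotProduct]

lemma HasFDerivAt.dotProduct {f g : E → ι → ℝ} {f' g' : E →L[ℝ] ι → ℝ} {x : E}
    (hf : HasFDerivAt f f' x) (hg : HasFDerivAt g g' x) :
    HasFDerivAt (fun y => f y ⬝ᵥ g y) (dotProductCLM (f x) ∘L g' + dotProductCLM (g x) ∘L f') x := by
  have hterm (i : ι) := (hasFDerivAt_pi'.1 hf i).mul (hasFDerivAt_pi'.1 hg i)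
  refine (HasFDerivAt.fun_sum fun i _ => hterm i).congr_fderiv ?_
  ext v
  simp [dotProductCLM, Finset.sum_add_distrib]

end DotProduct

lemma dotProduct_cross_swap {R : Type*} [CommRing R] (u v w : Fin 3 → R) :
    w ⬝ᵥ v ⨯₃ u = -(u ⬝ᵥ v ⨯₃ w) := by
  rw [triple_product_permutation, triple_product_permutation, ← cross_anticomm, dotProduct_neg]

section Bracket

variable (f g : G3 → ℝ) (p : G3)

lemma pb3_antisymm : pb3 f g p = -pb3 g f p := by
  simp only [pb3, ← cross_anticomm (gradY f p), ← cross_anticomm (gradX f p),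
    ← cross_anticomm (gradZ f p), dotProduct_neg, ← neg_add, dotProduct_add]
  ring

lemma pb3_self : pb3 f f p = 0 := by
  linarith [pb3_antisymm f f p]

end Bracket

section Hamiltonians

variable (b : Fin 3 → ℝ) (p : G3)

lemma grad_Ham_zero :
    gradY (Ham b 0) p = (2 : ℝ) • b ∧ gradX (Ham b 0) p = 0 ∧ gradZ (Ham b 0) p = 0 := by
  have h : HasFDerivAt (Ham b 0) _ p :=
    ((hasFDerivAt_const b p).dotProduct hasFDerivAt_fst).const_mul 2
  unfold gradY gradX gradZ
  rw [h.fderiv]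
  refine ⟨funext fun a => ?_, funext fun a => ?_, funext fun a => ?_⟩ <;> simp

lemma grad_Ham_one :
    gradY (Ham b 1) p = (2 : ℝ) • p.1 ∧ gradX (Ham b 1) p = (2 : ℝ) • b ∧
      gradZ (Ham b 1) p = 0 := by
  have h : HasFDerivAt (Ham b 1) _ p :=
    (hasFDerivAt_fst.dotProduct hasFDerivAt_fst).add
      (((hasFDerivAt_const b p).dotProduct hasFDerivAt_snd.fst).const_mul 2)
  unfold gradY gradX gradZ
  rw [h.fderiv]
  refine ⟨funext fun a => ?_, funext fun a => ?_, funext fun a => ?_⟩ <;> simp [two_mul]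

lemma grad_Ham_two :
    gradY (Ham b 2) p = (2 : ℝ) • p.2.1 ∧ gradX (Ham b 2) p = (2 : ℝ) • p.1 ∧
      gradZ (Ham b 2) p = (2 : ℝ) • b := by
  have h : HasFDerivAt (Ham b 2) _ p :=
    (((hasFDerivAt_const b p).dotProduct hasFDerivAt_snd.snd).add
      (hasFDerivAt_fst.dotProduct hasFDerivAt_snd.fst)).const_mul 2
  unfold gradY gradX gradZ
  rw [h.fderiv]
  refine ⟨funext fun a => ?_, funext fun a => ?_, funext fun a => ?_⟩ <;> simp

lemma pb3_Ham_zero_one : pb3 (Ham b 0) (Ham b 1) p = 0 := by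
  obtain ⟨hy₀, hx₀, hz₀⟩ := grad_Ham_zero b p
  obtain ⟨hy₁, hx₁, hz₁⟩ := grad_Ham_one b p
  simp [pb3, hy₀, hx₀, hz₀, hy₁, hx₁, hz₁, dot_cross_self]

lemma pb3_Ham_zero_two : pb3 (Ham b 0) (Ham b 2) p = 0 := by
  obtain ⟨hy₀, hx₀, hz₀⟩ := grad_Ham_zero b p
  obtain ⟨hy₂, hx₂, hz₂⟩ := grad_Ham_two b p
  simp [pb3, hy₀, hx₀, hz₀, hy₂, hx₂, hz₂, dotProduct_cross_swap p.2.1 b p.1]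

lemma pb3_Ham_one_two : pb3 (Ham b 1) (Ham b 2) p = 0 := by
  obtain ⟨hy₁, hx₁, hz₁⟩ := grad_Ham_one b p
  obtain ⟨hy₂, hx₂, hz₂⟩ := grad_Ham_two b p
  simp only [pb3, hy₁, hx₁, hz₁, hy₂, hx₂, hz₂, map_smul, map_zero, LinearMap.smul_apply,
    LinearMap.zero_apply, dotProduct_smul, smul_eq_mul, dot_self_cross, dot_cross_self, cross_self,
    smul_zero, mul_zero, zero_add, add_zero]
  rw [← cross_anticomm p.1 b, dotProduct_neg]
  ring

end Hamiltonians

/-- `H₁, H₂, H₃` pairwise Poisson-commute with respect to the Lie–Poisson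
structure `g^(3)`. -/
theorem stmt7 (b : Fin 3 → ℝ) (i j : Fin 3) (p : G3) :
    pb3 (Ham b i) (Ham b j) p = 0 := by
  have h_lt : ∀ i j : Fin 3, i < j → pb3 (Ham b i) (Ham b j) p = 0 := by
    intro i j hij
    fin_cases i <;> fin_cases j <;> try exact absurd hij (by decide)
    exacts [pb3_Ham_zero_one b p, pb3_Ham_zero_two b p, pb3_Ham_one_two b p]
  rcases lt_trichotomy i j with hij | rfl | hji
  · exact h_lt i j hij
  · exact pb3_self _ p
  · rw [pb3_antisymm, h_lt j i hji, neg_zero]
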